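/- Let A and B be commutative rings with unity and let φ: A → B be a surjective ring homomorphism whose kernel is the principal ideal ⟨π⟩. If I is an ideal of A such that φ(I) is generated by n elements, then there exist a_1, …, a_n ∈ I such that I = ⟨a_1, …, a_n⟩ + π·(I : π), where (I : π) = {x ∈ A : xπ ∈ I}. -/
import Mathlib


/-- Let `A` and `B` be commutative rings with unity and let `φ : A → B` be a
surjective ring homomorphism whose kernel is the principal ideal `⟨π⟩`.  If `I` is an ideal of
`A` such that `φ(I)` is generated by `n` elements, then there exist `a₁, …, aₙ ∈ I` such that
`I = ⟨a₁, …, aₙ⟩ + π ⬝ (I : π)`, where `(I : π) = {x ∈ A : x·π ∈ I}`. -/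
theorem stmt_0 {A B : Type*} [CommRing A] [CommRing B] (φ : A →+* B)
    (hφ : Function.Surjective φ) (π : A) (hker : RingHom.ker φ = Ideal.span {π})
    (I : Ideal A) (n : ℕ) (g : Fin n → B)
    (hgen : I.map φ = Ideal.span (Set.range g)) :
    ∃ a : Fin n → A, (∀ i, a i ∈ I) ∧
      I = Ideal.span (Set.range a) + Ideal.span {π} * I.colon (Ideal.span {π}) := by
  -- lift each generator g i to an element a i ∈ I
  have hlift : ∀ i : Fin n, ∃ x ∈ I, φ x = g i := by
    intro i
    have : g i ∈ I.map φ := by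
      rw [hgen]; exact Ideal.subset_span ⟨i, rfl⟩
    exact (Ideal.mem_map_iff_of_surjective φ hφ).mp this
  choose a haI haφ using hlift
  refine ⟨a, haI, le_antisymm ?_ ?_⟩
  · intro x hx
    have hx' : φ x ∈ (Ideal.span (Set.range a)).map φ := by
      rw [Ideal.map_span]
      have : φ '' Set.range a = Set.range g := by
        rw [← Set.range_comp]
        exact congrArg Set.range (funext haφ)
      rw [this, ← hgen]
      exact Ideal.mem_map_of_mem φ hx
    obtain ⟨z, hz, hzx⟩ := (Ideal.mem_map_iff_of_surjective φ hφ).mp hx'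
    have hker' : x - z ∈ Ideal.span {π} := by
      rw [← hker]
      simp [RingHom.mem_ker, map_sub, hzx]
    obtain ⟨c, hc⟩ := Ideal.mem_span_singleton'.mp hker'
    have hzI : z ∈ I := Ideal.span_le.mpr (by rintro _ ⟨i, rfl⟩; exact haI i) hz
    have hcm : c ∈ I.colon (Ideal.span {π}) := by
      apply Submodule.mem_colon.mpr
      intro p hp
      obtain ⟨t, ht⟩ := Ideal.mem_span_singleton'.mp hp
      have : c • p = t * (x - z) := by rw [← ht, ← hc, smul_eq_mul]; ring
      rw [this]
      exact I.mul_mem_left t (I.sub_mem hx hzI)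
    have hx2 : x = z + π * c := by rw [mul_comm, hc]; ring
    rw [hx2]
    exact Submodule.add_mem_sup hz
      (Ideal.mul_mem_mul (Ideal.mem_span_singleton_self π) hcm)
  · apply sup_le
    · exact Ideal.span_le.mpr (by rintro _ ⟨i, rfl⟩; exact haI i)
    · rw [Ideal.mul_le]
      intro r hr s hs
      obtain ⟨t, ht⟩ := Ideal.mem_span_singleton'.mp hr
      have hsπ : s * π ∈ I := by
        have := Submodule.mem_colon.mp hs π (Ideal.mem_span_singleton_self π)
        rwa [smul_eq_mul] at this
      have : r * s = t * (s * π) := by rw [← ht]; ring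
      rw [this]
      exact I.mul_mem_left t hsπ
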